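/- arXiv:2311.09455 — 2 statements merged into one kernel-verified Lean document; each statement's English description precedes it below -/
import Mathlib

section
/- Let S be a compact metric space, Λ : S → ℝ continuous with inf_S Λ > 0, and let R_n → R uniformly with all R_n, R continuous on S, and t_n → 0⁺. Suppose N : S → [0,∞) is continuous with N = 0 exactly on a closed set E ⊆ S, and consider h_n(r,θ) = r N(θ) + r² Λ(θ) - r t_n R_n(θ) on [0,∞) × S. If (r_n, θ_n) minimizes h_n and r_n > 0 for all n, then dist(θ_n, E) → 0. -/
open Filter

/-- Directions of unconfined minimizers of the second-order model
`h_n(r,θ) = rN(θ) + r²Λ(θ) - r t_n R_n(θ)` approach the zero set `E` of the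
first-derivative term `N` as `t_n → 0⁺`. -/
theorem stmt_14 {S : Type*} [MetricSpace S] [CompactSpace S]
    (Λ : S → ℝ) (hΛc : Continuous Λ) (hΛ : ∃ c : ℝ, 0 < c ∧ ∀ θ, c ≤ Λ θ)
    (R : ℕ → S → ℝ) (Rlim : S → ℝ)
    (hRc : ∀ n, Continuous (R n)) (hRlimc : Continuous Rlim)
    (hunif : TendstoUniformly R Rlim atTop)
    (t : ℕ → ℝ) (ht : ∀ n, 0 < t n) (htlim : Tendsto t atTop (nhds 0))
    (N : S → ℝ) (hNc : Continuous N) (hN0 : ∀ θ, 0 ≤ N θ)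
    (E : Set S) (hE : IsClosed E) (hNE : ∀ θ, N θ = 0 ↔ θ ∈ E)
    (h : ℕ → ℝ × S → ℝ)
    (hh : ∀ n (p : ℝ × S),
      h n p = p.1 * N p.2 + p.1 ^ 2 * Λ p.2 - p.1 * t n * R n p.2)
    (r : ℕ → ℝ) (θ : ℕ → S) (hr : ∀ n, 0 < r n)
    (hmin : ∀ n, ∀ q : ℝ × S, 0 ≤ q.1 → h n (r n, θ n) ≤ h n q) :
    Tendsto (fun n => Metric.infDist (θ n) E) atTop (nhds 0) := by
  obtain ⟨c, hc, hcΛ⟩ := hΛ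
  have hS : Nonempty S := ⟨θ 0⟩
  -- bound on Rlim
  obtain ⟨x₁, -, hx₁⟩ := isCompact_univ.exists_isMaxOn Set.univ_nonempty
    (hRlimc.norm.continuousOn)
  set M : ℝ := ‖Rlim x₁‖ with hM
  -- eventually uniform bound on R n
  have hb : ∀ᶠ n in atTop, ∀ x, |R n x| ≤ M + 1 := by
    filter_upwards [Metric.tendstoUniformly_iff.mp hunif 1 one_pos] with n hn x
    have h1 := hn x
    have h2 : |Rlim x| ≤ M := hx₁ (Set.mem_univ x)
    rw [Real.dist_eq] at h1
    calc |R n x| = |Rlim x - (Rlim x - R n x)| := by ring_nf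
      _ ≤ |Rlim x| + |Rlim x - R n x| := abs_sub _ _
      _ ≤ M + 1 := add_le_add h2 h1.le
  -- key inequality : N(θ n) ≤ t n * R n (θ n)
  have key : ∀ n, N (θ n) ≤ t n * R n (θ n) := by
    intro n
    have h0 := hmin n (0, θ n) le_rfl
    rw [hh, hh] at h0
    simp only [zero_mul, zero_pow, mul_zero, sub_zero, add_zero, zero_add] at h0
    have hrc : 0 < r n * c := mul_pos (hr n) hc
    nlinarith [hr n, hcΛ (θ n), mul_le_mul_of_nonneg_left (hcΛ (θ n)) (sq_nonneg (r n))]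
  -- t n * R n (θ n) → 0
  have htR : Tendsto (fun n => t n * R n (θ n)) atTop (nhds 0) := by
    have hbd : ∀ᶠ n in atTop, ‖t n * R n (θ n)‖ ≤ (M + 1) * t n := by
      filter_upwards [hb] with n hn
      rw [Real.norm_eq_abs, abs_mul, abs_of_pos (ht n), mul_comm]
      exact mul_le_mul_of_nonneg_right (hn _) (ht n).le
    have : Tendsto (fun n => (M + 1) * t n) atTop (nhds ((M + 1) * 0)) :=
      htlim.const_mul _
    rw [mul_zero] at this
    exact squeeze_zero_norm' hbd this
  -- N (θ n) → 0
  have hNθ : Tendsto (fun n => N (θ n)) atTop (nhds 0) :=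
    tendsto_of_tendsto_of_tendsto_of_le_of_le tendsto_const_nhds htR
      (fun n => hN0 _) key
  -- conclude
  rcases E.eq_empty_or_nonempty with hEe | hEne
  · simp [hEe, Metric.infDist_empty, tendsto_const_nhds]
  rw [NormedAddCommGroup.tendsto_nhds_zero]
  intro ε hε
  set K : Set S := {x | ε ≤ Metric.infDist x E} with hK
  have hKc : IsClosed K := isClosed_le continuous_const (Metric.continuous_infDist_pt E)
  rcases K.eq_empty_or_nonempty with hKe | hKne
  · refine Eventually.of_forall fun n => ?_
    rw [Real.norm_of_nonneg Metric.infDist_nonneg]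
    by_contra hcon
    exact (Set.eq_empty_iff_forall_notMem.mp hKe (θ n)) (not_lt.mp hcon)
  obtain ⟨x₀, hx₀K, hx₀min⟩ := (hKc.isCompact).exists_isMinOn hKne hNc.continuousOn
  have hx₀E : x₀ ∉ E := by
    intro hmem
    have : Metric.infDist x₀ E = 0 := Metric.infDist_zero_of_mem hmem
    have := hx₀K
    rw [hK] at this
    simp only [Set.mem_setOf_eq] at this
    linarith [hx₀K.out]
  have hδ : 0 < N x₀ := lt_of_le_of_ne (hN0 x₀) (fun heq => hx₀E ((hNE x₀).mp heq.symm))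
  filter_upwards [hNθ.eventually (gt_mem_nhds hδ)] with n hn
  rw [Real.norm_of_nonneg Metric.infDist_nonneg]
  by_contra hcon
  exact absurd hn (not_lt.mpr (hx₀min (not_lt.mp hcon)))
end

section
/- In the setting of the previous statement, assume additionally that N is the restriction to S of a nonnegative continuous function vanishing exactly on E, and that max_{θ∈E} R(θ)/√(Λ(θ)) is attained at a unique θ* ∈ E with R(θ*) > 0. Then the minimizers (r_n,θ_n) of h_n(r,θ) = rN(θ) + r²Λ(θ) - r t_n R_n(θ) satisfy θ_n → θ* and r_n/t_n → R(θ*)/(2Λ(θ*)). -/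
/-!
For fixed `θ` the objective is a parabola in `r`, so a minimizer with `r > 0` sits at its vertex:
`2 Λ(θₙ) rₙ = tₙ Rₙ(θₙ) - N(θₙ)`, with minimal value `-Λ(θₙ) rₙ²`. Comparing with the vertex of
the parabola over `θ*`, where `N` vanishes, and using `N ≥ 0` gives the sandwich
`Rₙ(θ*)/√Λ(θ*) ≤ 2 √Λ(θₙ) · rₙ/tₙ ≤ Rₙ(θₙ)/√Λ(θₙ)`.
If `θₙ → φ` along a subsequence, then `0 ≤ N(θₙ) ≤ tₙ Rₙ(θₙ) → 0` puts `φ` in `E`, and the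
sandwich gives `R(θ*)/√Λ(θ*) ≤ R(φ)/√Λ(φ)`, so `φ = θ*`; by compactness `θₙ → θ*`, and then
the sandwich determines the limit of `rₙ/tₙ`.
-/

open Filter Topology Set

def modelObjective {S : Type*} (N Λ R : S → ℝ) (t : ℝ) (p : ℝ × S) : ℝ :=
  p.1 * N p.2 + p.1 ^ 2 * Λ p.2 - p.1 * t * R p.2

theorem two_mul_mul_eq_of_isMinOn_Ici {A b x : ℝ} (hA : 0 < A) (hx : 0 < x)
    (hmin : IsMinOn (fun y => y ^ 2 * A - y * b) (Ici 0) x) : 2 * A * x = b := by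
  have h0 : x ^ 2 * A - x * b ≤ 0 ^ 2 * A - 0 * b := isMinOn_iff.1 hmin 0 self_mem_Ici
  have hb : 0 < b := pos_of_mul_pos_right (by nlinarith [mul_pos (pow_pos hx 2) hA]) hx.le
  have hvertex := isMinOn_iff.1 hmin (b / (2 * A)) (mem_Ici.2 (by positivity))
  have hsq : (2 * A * x - b) ^ 2 ≤ 0 := by
    have : (b / (2 * A)) ^ 2 * A - b / (2 * A) * b = -(b ^ 2 / (4 * A)) := by
      field_simp; ring
    rw [this, le_neg, div_le_iff₀ (by positivity)] at hvertex
    linarith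
  nlinarith [sq_nonneg (2 * A * x - b)]

section Minimizer

variable {S : Type*} {N Λ R : S → ℝ} {t r : ℝ} {θ : S}

theorem two_mul_mul_eq_of_isMinOn_modelObjective (hΛ : 0 < Λ θ) (hr : 0 < r)
    (hmin : IsMinOn (modelObjective N Λ R t) {q | 0 ≤ q.1} (r, θ)) :
    2 * Λ θ * r = t * R θ - N θ := by
  refine two_mul_mul_eq_of_isMinOn_Ici hΛ hr (isMinOn_iff.2 fun y hy => ?_)
  have := isMinOn_iff.1 hmin (y, θ) hy
  simp only [modelObjective] at this
  linear_combination this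

theorem le_mul_of_isMinOn_modelObjective (hΛ : 0 < Λ θ) (hr : 0 < r)
    (hmin : IsMinOn (modelObjective N Λ R t) {q | 0 ≤ q.1} (r, θ)) : N θ ≤ t * R θ := by
  nlinarith [two_mul_mul_eq_of_isMinOn_modelObjective hΛ hr hmin]

theorem div_sqrt_le_of_isMinOn_modelObjective (ht : 0 < t) (hΛ : ∀ φ, 0 < Λ φ) (hr : 0 < r)
    (hmin : IsMinOn (modelObjective N Λ R t) {q | 0 ≤ q.1} (r, θ)) {φ : S} (hφ : N φ = 0) :
    R φ / √(Λ φ) ≤ 2 * √(Λ θ) * (r / t) := by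
  have hΛθ := hΛ θ
  have hΛφ := hΛ φ
  have hrhs : 0 < 2 * √(Λ θ) * (r / t) := by positivity
  rcases le_or_gt (R φ) 0 with hRφ | hRφ
  · exact (div_nonpos_of_nonpos_of_nonneg hRφ (Real.sqrt_nonneg _)).trans hrhs.le
  have hvertex := isMinOn_iff.1 hmin (t * R φ / (2 * Λ φ), φ) (show (0:ℝ) ≤ _ by positivity)
  have hval : modelObjective N Λ R t (r, θ) = -(Λ θ * r ^ 2) := by
    simp only [modelObjective]
    linear_combination r * two_mul_mul_eq_of_isMinOn_modelObjective hΛθ hr hmin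
  have hval' :
      modelObjective N Λ R t (t * R φ / (2 * Λ φ), φ) = -((t * R φ) ^ 2 / (4 * Λ φ)) := by
    simp only [modelObjective, hφ]
    field_simp; ring
  rw [hval, hval', neg_le_neg_iff, div_le_iff₀ (by positivity)] at hvertex
  rw [← pow_le_pow_iff_left₀ (by positivity) hrhs.le two_ne_zero, div_pow, mul_pow, mul_pow,
    Real.sq_sqrt hΛφ.le, Real.sq_sqrt hΛθ.le, div_pow, div_le_iff₀ hΛφ]
  field_simp
  linarith

theorem mul_div_le_div_sqrt_of_isMinOn_modelObjective (ht : 0 < t) (hN : 0 ≤ N θ) (hΛ : 0 < Λ θ)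
    (hr : 0 < r)
    (hmin : IsMinOn (modelObjective N Λ R t) {q | 0 ≤ q.1} (r, θ)) :
    2 * √(Λ θ) * (r / t) ≤ R θ / √(Λ θ) := by
  have hcrit := two_mul_mul_eq_of_isMinOn_modelObjective hΛ hr hmin
  have hs : 0 < √(Λ θ) := Real.sqrt_pos.2 hΛ
  rw [le_div_iff₀ hs, show 2 * √(Λ θ) * (r / t) * √(Λ θ) = 2 * (√(Λ θ) * √(Λ θ)) * r / t by ring,
    Real.mul_self_sqrt hΛ.le, div_le_iff₀ ht]
  linarith

end Minimizer

theorem tendsto_argmax_of_forall_div_sqrt_le {S : Type*} [TopologicalSpace S] [CompactSpace S]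
    [FirstCountableTopology S] {Λ N Rlim : S → ℝ} {R : ℕ → S → ℝ} {t : ℕ → ℝ} {θ : ℕ → S}
    {θstar : S} (hΛc : Continuous Λ) (hΛ : ∀ φ, 0 < Λ φ) (hNc : Continuous N)
    (hRlimc : Continuous Rlim) (hunif : TendstoUniformly R Rlim atTop)
    (htlim : Tendsto t atTop (𝓝 0)) (hN0 : ∀ n, 0 ≤ N (θ n))
    (hNle : ∀ n, N (θ n) ≤ t n * R n (θ n))
    (hle : ∀ n, R n θstar / √(Λ θstar) ≤ R n (θ n) / √(Λ (θ n)))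
    (hmax : ∀ φ, N φ = 0 → φ ≠ θstar → Rlim φ / √(Λ φ) < Rlim θstar / √(Λ θstar)) :
    Tendsto θ atTop (𝓝 θstar) := by
  refine tendsto_nhds_of_unique_mapClusterPt fun φ hφ => ?_
  obtain ⟨ψ, hψ, hθψ⟩ := hφ.tendsto_subseq
  have hunifψ : TendstoUniformly (fun k => R (ψ k)) Rlim atTop :=
    fun u hu => hψ.tendsto_atTop.eventually (hunif u hu)
  have hRψ : Tendsto (fun k => R (ψ k) (θ (ψ k))) atTop (𝓝 (Rlim φ)) :=
    hunifψ.tendsto_comp hRlimc.continuousAt hθψ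
  have hNφ : N φ = 0 := by
    have htR : Tendsto (fun k => t (ψ k) * R (ψ k) (θ (ψ k))) atTop (𝓝 0) := by
      simpa using (htlim.comp hψ.tendsto_atTop).mul hRψ
    refine tendsto_nhds_unique ((hNc.tendsto φ).comp hθψ) ?_
    exact tendsto_of_tendsto_of_tendsto_of_le_of_le tendsto_const_nhds htR
      (fun k => hN0 (ψ k)) fun k => hNle (ψ k)
  have hleφ : Rlim θstar / √(Λ θstar) ≤ Rlim φ / √(Λ φ) :=
    le_of_tendsto_of_tendsto' (((hunif.tendsto_at θstar).comp hψ.tendsto_atTop).div_const _)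
      (hRψ.div ((hΛc.tendsto φ).comp hθψ).sqrt (Real.sqrt_pos.2 (hΛ φ)).ne') fun k => hle (ψ k)
  by_contra hne
  exact (hmax φ hNφ hne).not_ge hleφ

theorem stmt_15_general {S : Type*} [MetricSpace S] [CompactSpace S]
    (Λ : S → ℝ) (hΛc : Continuous Λ) (hΛ : ∃ c : ℝ, 0 < c ∧ ∀ θ, c ≤ Λ θ)
    (R : ℕ → S → ℝ) (Rlim : S → ℝ)
    (hRlimc : Continuous Rlim)
    (hunif : TendstoUniformly R Rlim atTop)
    (t : ℕ → ℝ) (ht : ∀ n, 0 < t n) (htlim : Tendsto t atTop (nhds 0))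
    (N : S → ℝ) (hNc : Continuous N) (hN0 : ∀ θ, 0 ≤ N θ)
    (E : Set S) (hNE : ∀ θ, N θ = 0 ↔ θ ∈ E)
    (h : ℕ → ℝ × S → ℝ)
    (hh : ∀ n (p : ℝ × S),
      h n p = p.1 * N p.2 + p.1 ^ 2 * Λ p.2 - p.1 * t n * R n p.2)
    (r : ℕ → ℝ) (θ : ℕ → S) (hr : ∀ n, 0 < r n)
    (hmin : ∀ n, ∀ q : ℝ × S, 0 ≤ q.1 → h n (r n, θ n) ≤ h n q)
    (θstar : S) (hθE : θstar ∈ E)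
    (hmax : ∀ φ ∈ E, φ ≠ θstar →
      Rlim φ / Real.sqrt (Λ φ) < Rlim θstar / Real.sqrt (Λ θstar)) :
    Tendsto θ atTop (nhds θstar) ∧
    Tendsto (fun n => r n / t n) atTop (nhds (Rlim θstar / (2 * Λ θstar))) := by
  obtain ⟨c, hc, hcΛ⟩ := hΛ
  have hΛpos : ∀ φ, 0 < Λ φ := fun φ => hc.trans_le (hcΛ φ)
  have hminOn : ∀ n, IsMinOn (modelObjective N Λ (R n) (t n)) {q | 0 ≤ q.1} (r n, θ n) :=
    fun n => isMinOn_iff.2 fun q hq => by simpa only [hh, modelObjective] using hmin n q hq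
  have hlower : ∀ n, R n θstar / √(Λ θstar) ≤ 2 * √(Λ (θ n)) * (r n / t n) := fun n =>
    div_sqrt_le_of_isMinOn_modelObjective (ht n) hΛpos (hr n) (hminOn n) ((hNE θstar).2 hθE)
  have hupper : ∀ n, 2 * √(Λ (θ n)) * (r n / t n) ≤ R n (θ n) / √(Λ (θ n)) := fun n =>
    mul_div_le_div_sqrt_of_isMinOn_modelObjective (ht n) (hN0 _) (hΛpos _) (hr n) (hminOn n)
  have hθ : Tendsto θ atTop (𝓝 θstar) :=
    tendsto_argmax_of_forall_div_sqrt_le hΛc hΛpos hNc hRlimc hunif htlim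
      (fun n => hN0 _) (fun n => le_mul_of_isMinOn_modelObjective (hΛpos _) (hr n) (hminOn n))
      (fun n => (hlower n).trans (hupper n)) fun φ hφ => hmax φ ((hNE φ).1 hφ)
  refine ⟨hθ, ?_⟩
  have hsqrtΛ : Tendsto (fun n => √(Λ (θ n))) atTop (𝓝 √(Λ θstar)) :=
    ((hΛc.tendsto θstar).comp hθ).sqrt
  have hsqrtpos := Real.sqrt_pos.2 (hΛpos θstar)
  have hw : Tendsto (fun n => 2 * √(Λ (θ n)) * (r n / t n)) atTop
      (𝓝 (Rlim θstar / √(Λ θstar))) :=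
    tendsto_of_tendsto_of_tendsto_of_le_of_le ((hunif.tendsto_at θstar).div_const _)
      ((hunif.tendsto_comp hRlimc.continuousAt hθ).div hsqrtΛ hsqrtpos.ne') hlower hupper
  have hlim : Rlim θstar / (2 * Λ θstar) = Rlim θstar / √(Λ θstar) / (2 * √(Λ θstar)) := by
    rw [div_div, mul_left_comm, Real.mul_self_sqrt (hΛpos θstar).le]
  rw [hlim]
  refine (hw.div (hsqrtΛ.const_mul 2) (mul_pos two_pos hsqrtpos).ne').congr fun n => ?_
  exact mul_div_cancel_left₀ _ (mul_pos two_pos (Real.sqrt_pos.2 (hΛpos (θ n)))).ne'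

/-- Convergence of the rescaled unconfined minimizer of the model objective
`h_n(r,θ) = rN(θ) + r²Λ(θ) - r t_n R_n(θ)` to the escape vector: if `R/√Λ`
attains its maximum over `E = {N = 0}` at a unique `θ*` with `R(θ*) > 0`, then
`θ_n → θ*` and `r_n/t_n → R(θ*)/(2Λ(θ*))`. -/
theorem stmt_15 {S : Type*} [MetricSpace S] [CompactSpace S]
    (Λ : S → ℝ) (hΛc : Continuous Λ) (hΛ : ∃ c : ℝ, 0 < c ∧ ∀ θ, c ≤ Λ θ)
    (R : ℕ → S → ℝ) (Rlim : S → ℝ)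
    (hRc : ∀ n, Continuous (R n)) (hRlimc : Continuous Rlim)
    (hunif : TendstoUniformly R Rlim atTop)
    (t : ℕ → ℝ) (ht : ∀ n, 0 < t n) (htlim : Tendsto t atTop (nhds 0))
    (N : S → ℝ) (hNc : Continuous N) (hN0 : ∀ θ, 0 ≤ N θ)
    (E : Set S) (hE : IsClosed E) (hNE : ∀ θ, N θ = 0 ↔ θ ∈ E)
    (h : ℕ → ℝ × S → ℝ)
    (hh : ∀ n (p : ℝ × S),
      h n p = p.1 * N p.2 + p.1 ^ 2 * Λ p.2 - p.1 * t n * R n p.2)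
    (r : ℕ → ℝ) (θ : ℕ → S) (hr : ∀ n, 0 < r n)
    (hmin : ∀ n, ∀ q : ℝ × S, 0 ≤ q.1 → h n (r n, θ n) ≤ h n q)
    (θstar : S) (hθE : θstar ∈ E) (hRpos : 0 < Rlim θstar)
    (hmax : ∀ φ ∈ E, φ ≠ θstar →
      Rlim φ / Real.sqrt (Λ φ) < Rlim θstar / Real.sqrt (Λ θstar)) :
    Tendsto θ atTop (nhds θstar) ∧
    Tendsto (fun n => r n / t n) atTop (nhds (Rlim θstar / (2 * Λ θstar))) :=
  stmt_15_general Λ hΛc hΛ R Rlim hRlimc hunif t ht htlim N hNc hN0 E hNE h hh r θ hr hmin θstar hθE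
    hmax
end
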